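/- Let G be a connected simple graph on n vertices with Laplacian matrix L, let 𝟙 ∈ ℝⁿ be the all-ones vector, let Γ = [L | 𝟙] be the n×(n+1) matrix obtained from L by appending the column 𝟙, and let J be the n×n all-ones matrix. Then the n-dimensional Lebesgue volume of the zonotope Z(Γ) equals det(L + J). -/

import Mathlib

open MeasureTheory

/-- The zonotope generated by a `d × k` real matrix: the image of the unit cube
`[0,1]^k` under the linear map `x ↦ M x`. -/
def zonotope {d k : ℕ} (M : Matrix (Fin d) (Fin k) ℝ) : Set (Fin d → ℝ) :=
  {y | ∃ x : Fin k → ℝ, (∀ i, x i ∈ Set.Icc (0 : ℝ) 1) ∧ y = M.mulVec x}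

/-!
Since `L 𝟙 = 0`, we have `L x = L (x - x₀ 𝟙)`, so the zonotope of `[L | 𝟙]` is the image, under
the matrix `N` obtained from `L` by replacing its column `0` with `𝟙`, of
`[0,1] × ([0,1]^(n-1) + [-1,0] 𝟙)`. Slicing along the first coordinate shows that the cube swept
along the diagonal, `[0,1]^m + [a,b] 𝟙`, has volume `1 + m (b - a)`, so this set has volume `n`.
Replacing column `0` of `L + J` by the sum of all columns, which is `n 𝟙`, gives
`det (L + J) = n det N`; as `L + J` is positive semidefinite, `n |det N| = det (L + J)`.
-/

open Set Matrix

lemma volume_fin_zero_eq_one {s : Set (Fin 0 → ℝ)} (hs : s.Nonempty) : volume s = 1 := by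
  rw [hs.eq_univ, Measure.volume_pi_eq_dirac, measure_univ]

def cubeSweep (m : ℕ) (a b : ℝ) : Set (Fin m → ℝ) :=
  {w | ∃ c ∈ Icc a b, ∀ i, w i - c ∈ Icc (0 : ℝ) 1}

section CubeSweep

variable {m : ℕ} {a b : ℝ}

lemma cubeSweep_eq_image :
    cubeSweep m a b = (fun p : ℝ × (Fin m → ℝ) => p.2 + fun _ => p.1) ''
      (Icc a b ×ˢ univ.pi fun _ => Icc 0 1) := by
  ext w
  constructor
  · rintro ⟨c, hc, hw⟩
    exact ⟨(c, fun i => w i - c), ⟨hc, fun i _ => hw i⟩, by funext i; simp⟩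
  · rintro ⟨⟨c, x⟩, ⟨hc, hx⟩, rfl⟩
    exact ⟨c, hc, fun i => by simpa using hx i (mem_univ i)⟩

lemma isCompact_cubeSweep : IsCompact (cubeSweep m a b) := by
  rw [cubeSweep_eq_image]
  exact (isCompact_Icc.prod (isCompact_univ_pi fun _ => isCompact_Icc)).image (by fun_prop)

lemma cubeSweep_eq_empty (h : b < a) : cubeSweep m a b = ∅ :=
  eq_empty_iff_forall_notMem.2 fun _ ⟨_, ⟨hac, hcb⟩, _⟩ => (h.trans_le hac).not_ge hcb

lemma cons_mem_cubeSweep_iff (s : ℝ) (w : Fin m → ℝ) :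
    Fin.cons s w ∈ cubeSweep (m + 1) a b ↔ w ∈ cubeSweep m (max a (s - 1)) (min b s) := by
  simp only [cubeSweep, mem_ofPred_eq, Fin.forall_fin_succ, Fin.cons_zero, Fin.cons_succ, mem_Icc,
    max_le_iff, le_min_iff]
  constructor
  · rintro ⟨c, ⟨hac, hcb⟩, ⟨hsc, hsc'⟩, hw⟩
    exact ⟨c, ⟨⟨hac, by linarith⟩, hcb, by linarith⟩, hw⟩
  · rintro ⟨c, ⟨⟨hac, hsc⟩, hcb, hcs⟩, hw⟩
    exact ⟨c, ⟨hac, hcb⟩, ⟨by linarith, by linarith⟩, hw⟩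

lemma max_le_min_iff_mem_Icc (hab : a ≤ b) {s : ℝ} :
    max a (s - 1) ≤ min b s ↔ s ∈ Icc a (b + 1) := by
  rw [max_le_iff, le_min_iff, le_min_iff, mem_Icc]
  grind

lemma integral_min_sub_max (hab : a ≤ b) :
    ∫ s in a..b + 1, (min b s - max a (s - 1)) = b - a := by
  have hint {f : ℝ → ℝ} (hf : Continuous f) (u v : ℝ) : IntervalIntegrable f volume u v :=
    hf.intervalIntegrable u v
  have hmin : ∫ s in a..b + 1, min b s = (b ^ 2 - a ^ 2) / 2 + b := by
    rw [← intervalIntegral.integral_add_adjacent_intervals (b := b) (hint (by fun_prop) _ _)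
        (hint (by fun_prop) _ _),
      intervalIntegral.integral_congr (f := min b) (g := id)
        fun s hs => min_eq_right (uIcc_of_le hab ▸ hs).2,
      intervalIntegral.integral_congr (f := min b) (a := b) (g := fun _ => b)
        fun s hs => min_eq_left (uIcc_of_le (by linarith : b ≤ b + 1) ▸ hs).1]
    simp
  have hmax : ∫ s in a..b + 1, max a (s - 1) = a + (b ^ 2 - a ^ 2) / 2 := by
    rw [← intervalIntegral.integral_add_adjacent_intervals (b := a + 1) (hint (by fun_prop) _ _)
        (hint (by fun_prop) _ _),
      intervalIntegral.integral_congr (g := fun _ => a)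
        fun s hs => max_eq_left (by linarith [(uIcc_of_le (by linarith : a ≤ a + 1) ▸ hs).2]),
      intervalIntegral.integral_congr (a := a + 1) (g := fun s => s - 1) fun s hs =>
        max_eq_right (by linarith [(uIcc_of_le (by linarith : a + 1 ≤ b + 1) ▸ hs).1])]
    simp only [intervalIntegral.integral_const, smul_eq_mul, add_sub_cancel_left,
      intervalIntegral.integral_sub intervalIntegral.intervalIntegrable_id intervalIntegrable_const,
      integral_id]
    ring
  rw [intervalIntegral.integral_sub (hint (by fun_prop) _ _) (hint (by fun_prop) _ _), hmin, hmax]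
  ring

lemma lintegral_volume_cubeSweep_slice (m : ℕ) (hab : a ≤ b) :
    ∫⁻ s, (Icc a (b + 1)).indicator
        (fun s => ENNReal.ofReal (1 + m * (min b s - max a (s - 1)))) s =
      ENNReal.ofReal (1 + (m + 1 : ℕ) * (b - a)) := by
  rw [lintegral_indicator measurableSet_Icc, ← ofReal_integral_eq_lintegral_ofReal]
  · rw [integral_Icc_eq_integral_Ioc, ← intervalIntegral.integral_of_le (by linarith),
      intervalIntegral.integral_add intervalIntegrable_const
        ((Continuous.intervalIntegrable (by fun_prop) _ _).const_mul _),
      intervalIntegral.integral_const, intervalIntegral.integral_const_mul,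
      integral_min_sub_max hab]
    push_cast
    ring_nf
  · exact Continuous.integrableOn_Icc (by fun_prop)
  · filter_upwards [ae_restrict_mem measurableSet_Icc] with s hs
    have := (max_le_min_iff_mem_Icc hab).2 hs
    simp only [Pi.zero_apply]
    nlinarith [(Nat.cast_nonneg m : (0 : ℝ) ≤ m)]

lemma volume_cubeSweep (m : ℕ) (hab : a ≤ b) :
    volume (cubeSweep m a b) = ENNReal.ofReal (1 + m * (b - a)) := by
  induction m generalizing a b with
  | zero =>
    simpa using volume_fin_zero_eq_one
      (⟨0, a, ⟨le_rfl, hab⟩, finZeroElim⟩ : (cubeSweep 0 a b).Nonempty)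
  | succ m ih =>
    let e := MeasurableEquiv.piFinSuccAbove (fun _ : Fin (m + 1) => ℝ) 0
    have hslice (s : ℝ) : volume (Prod.mk s ⁻¹' (e.symm ⁻¹' cubeSweep (m + 1) a b)) =
        (Icc a (b + 1)).indicator
          (fun s => ENNReal.ofReal (1 + m * (min b s - max a (s - 1)))) s := by
      have hsliceEq : Prod.mk s ⁻¹' (e.symm ⁻¹' cubeSweep (m + 1) a b) =
          cubeSweep m (max a (s - 1)) (min b s) := by
        ext w
        simp only [e, mem_preimage, MeasurableEquiv.piFinSuccAbove_symm_apply,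
          Fin.insertNthEquiv_zero]
        exact cons_mem_cubeSweep_iff s w
      rw [hsliceEq]
      by_cases hs : s ∈ Icc a (b + 1)
      · rw [indicator_of_mem hs, ih ((max_le_min_iff_mem_Icc hab).2 hs)]
      · rw [indicator_of_notMem hs, cubeSweep_eq_empty, measure_empty]
        exact not_le.1 (mt (max_le_min_iff_mem_Icc hab).1 hs)
    have hmeas : MeasurableSet (e.symm ⁻¹' cubeSweep (m + 1) a b) :=
      e.symm.measurable isCompact_cubeSweep.isClosed.measurableSet
    rw [← (volume_preserving_piFinSuccAbove _ 0).symm.measure_preimage_equiv,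
      Measure.volume_eq_prod, Measure.prod_apply hmeas]
    simp_rw [hslice]
    exact lintegral_volume_cubeSweep_slice m hab

end CubeSweep

lemma det_one_updateRow_one {n R : Type*} [Fintype n] [DecidableEq n] [CommRing R] (j : n) :
    ((1 : Matrix n n R).updateRow j 1).det = 1 := by
  have h := det_updateRow_sum (1 : Matrix n n R) j 1
  have hrows : ∑ k, (1 : n → R) k • (1 : Matrix n n R) k = 1 := by
    ext l
    rw [Finset.sum_apply]
    simp [one_apply]
  rwa [hrows, Pi.one_apply, one_smul, det_one] at h

lemma det_add_ones_of_mulVec_one_eq_zero {n R : Type*} [Fintype n] [DecidableEq n] [CommRing R]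
    {A : Matrix n n R} (hA : A *ᵥ 1 = 0) (j : n) :
    (A + of fun _ _ => 1).det = Fintype.card n * (A.updateCol j 1).det := by
  set J : Matrix n n R := of fun _ _ => 1
  have hsum : (A + J) *ᵥ 1 = (Fintype.card n : R) • 1 := by
    rw [add_mulVec, hA, zero_add]
    ext i
    simp [J, mulVec, dotProduct]
  -- right multiplication by `updateRow 1 j 1` adds column `j` (here `𝟙`) to every other column
  have hcol : (A + J).updateCol j 1 = A.updateCol j 1 * (1 : Matrix n n R).updateRow j 1 := by
    have hE : (1 : Matrix n n R).updateRow j 1 =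
        1 + of fun x k => if x = j ∧ k ≠ j then 1 else 0 := by
      ext x k
      simp only [updateRow_apply, Pi.one_apply, Matrix.add_apply, of_apply, Matrix.one_apply]
      split_ifs <;> simp_all
    rw [hE, Matrix.mul_add, Matrix.mul_one]
    ext i k
    by_cases hk : k = j <;> simp [J, mul_apply, hk, ite_and, add_comm]
  have hcolSum := (det_updateCol_sum (A + J) j 1).symm
  simp only [Pi.one_apply, one_smul] at hcolSum
  calc (A + J).det = ((A + J).updateCol j ((A + J) *ᵥ 1)).det := by
        convert hcolSum using 3
        ext k
        simp [mulVec, dotProduct]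
    _ = Fintype.card n * (A.updateCol j 1).det := by
        rw [hsum, det_updateCol_smul, hcol, det_mul, det_one_updateRow_one, mul_one]

def appendOnesCol {R : Type*} [One R] {d k : ℕ} (A : Matrix (Fin d) (Fin k) R) :
    Matrix (Fin d) (Fin (k + 1)) R :=
  fun i j => if h : (j : ℕ) < k then A i ⟨j, h⟩ else 1

lemma appendOnesCol_mulVec {R : Type*} [Semiring R] {d k : ℕ} (A : Matrix (Fin d) (Fin k) R)
    (x : Fin (k + 1) → R) : appendOnesCol A *ᵥ x = A *ᵥ Fin.init x + x (Fin.last k) • 1 := by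
  ext i
  simp [appendOnesCol, mulVec, dotProduct, Fin.sum_univ_castSucc, Fin.init]

lemma updateCol_zero_one_mulVec {R : Type*} [Semiring R] {d m : ℕ}
    (A : Matrix (Fin d) (Fin (m + 1)) R) (v : Fin (m + 1) → R) :
    A.updateCol 0 1 *ᵥ v = A *ᵥ Fin.cons 0 (Fin.tail v) + v 0 • 1 := by
  ext i
  simp [mulVec, dotProduct, Fin.sum_univ_succ, updateCol_apply, Fin.succ_ne_zero, Fin.tail,
    add_comm]

lemma mulVec_sub_smul_one {R : Type*} [CommRing R] {d k : ℕ} {A : Matrix (Fin d) (Fin k) R}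
    (hA : A *ᵥ 1 = 0) (x : Fin k → R) (c : R) : A *ᵥ (x - c • 1) = A *ᵥ x := by
  rw [mulVec_sub, mulVec_smul, hA, smul_zero, sub_zero]

lemma zonotope_appendOnesCol {d m : ℕ} {A : Matrix (Fin d) (Fin (m + 1)) ℝ} (hA : A *ᵥ 1 = 0) :
    zonotope (appendOnesCol A) = toLin' (A.updateCol 0 1) ''
      (MeasurableEquiv.piFinSuccAbove (fun _ => ℝ) 0 ⁻¹' (Icc 0 1 ×ˢ cubeSweep m (-1) 0)) := by
  ext y
  simp only [zonotope, mem_ofPred_eq, mem_image, mem_preimage, mem_prod, toLin'_apply,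
    appendOnesCol_mulVec, updateCol_zero_one_mulVec]
  constructor
  · rintro ⟨x, hx, rfl⟩
    have hx' (i : Fin (m + 1)) : Fin.init x i ∈ Icc 0 1 := hx _
    refine ⟨Fin.cons (x (Fin.last _)) fun i => Fin.init x i.succ - Fin.init x 0,
      ⟨hx _, -Fin.init x 0, ?_, fun i => ?_⟩, ?_⟩
    · exact ⟨by linarith [(hx' 0).2], by linarith [(hx' 0).1]⟩
    · simpa using hx' i.succ
    · have hshift : Fin.cons 0 (fun i => Fin.init x i.succ - Fin.init x 0) =
          Fin.init x - Fin.init x 0 • 1 := by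
        ext i; cases i using Fin.cases <;> simp
      simp [hshift, mulVec_sub_smul_one hA]
  · rintro ⟨v, ⟨hv0, c, hc, hv⟩, rfl⟩
    refine ⟨Fin.snoc (Fin.cons 0 (Fin.tail v) - c • 1) (v 0), fun i => ?_, ?_⟩
    · cases i using Fin.lastCases with
      | last => simpa using hv0
      | cast i =>
        cases i using Fin.cases with
        | zero => simpa using ⟨by linarith [hc.2], by linarith [hc.1]⟩
        | succ i => rw [Fin.snoc_castSucc]; simpa using hv i
    · simp [Fin.init_snoc, Fin.snoc_last, mulVec_sub_smul_one hA]

theorem volume_zonotope_appendOnesCol {d : ℕ} {A : Matrix (Fin d) (Fin d) ℝ} (hA : A *ᵥ 1 = 0) :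
    volume (zonotope (appendOnesCol A)) = ENNReal.ofReal |(A + of fun _ _ => 1).det| := by
  cases d with
  | zero =>
    have hne : (zonotope (appendOnesCol A)).Nonempty := ⟨0, 0, by simp, by simp⟩
    rw [volume_fin_zero_eq_one hne, det_isEmpty, abs_one, ENNReal.ofReal_one]
  | succ m =>
    rw [zonotope_appendOnesCol hA, Measure.addHaar_image_linearMap, LinearMap.det_toLin',
      (volume_preserving_piFinSuccAbove (fun _ => ℝ) 0).measure_preimage_equiv,
      Measure.volume_eq_prod, Measure.prod_prod, Real.volume_Icc,
      volume_cubeSweep m (by norm_num), det_add_ones_of_mulVec_one_eq_zero hA 0, Fintype.card_fin,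
      abs_mul, Nat.abs_cast, ENNReal.ofReal_mul (by positivity)]
    norm_num [mul_comm, add_comm]

theorem stmt19_general (n : ℕ) (G : SimpleGraph (Fin n)) [DecidableRel G.Adj]
    (L J : Matrix (Fin n) (Fin n) ℝ)
    (hLdef : L = SimpleGraph.lapMatrix ℝ G)
    (hJ : J = fun _ _ => (1 : ℝ))
    (Γ : Matrix (Fin n) (Fin (n + 1)) ℝ)
    (hΓ : Γ = fun i (j : Fin (n + 1)) => if h : (j : ℕ) < n then L i ⟨(j : ℕ), h⟩ else 1) :
    volume (zonotope Γ) = ENNReal.ofReal (L + J).det := by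
  have hJpsd : J.PosSemidef := by
    convert posSemidef_vecMulVec_self_star (1 : Fin n → ℝ)
    ext; simp [hJ, vecMulVec]
  have hpsd : (L + J).PosSemidef := hLdef ▸ (SimpleGraph.posSemidef_lapMatrix ℝ G).add hJpsd
  have hL : L *ᵥ 1 = 0 := hLdef ▸ SimpleGraph.lapMatrix_mulVec_const_eq_zero G
  subst hΓ hJ
  rw [← abs_of_nonneg hpsd.det_nonneg]
  exact volume_zonotope_appendOnesCol hL

/-- For a connected simple graph `G` on `n` vertices with Laplacian `L`,
appending the all-ones column `𝟙` to `L` to form `Γ = [L | 𝟙]`, the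
`n`-dimensional Lebesgue volume of the zonotope `Z(Γ)` equals `det (L + J)`,
where `J` is the all-ones matrix. -/
theorem stmt19 (n : ℕ) (G : SimpleGraph (Fin n)) [DecidableRel G.Adj]
    (hconn : G.Connected)
    (L J : Matrix (Fin n) (Fin n) ℝ)
    (hLdef : L = SimpleGraph.lapMatrix ℝ G)
    (hJ : J = fun _ _ => (1 : ℝ))
    (Γ : Matrix (Fin n) (Fin (n + 1)) ℝ)
    (hΓ : Γ = fun i (j : Fin (n + 1)) => if h : (j : ℕ) < n then L i ⟨(j : ℕ), h⟩ else 1) :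
    volume (zonotope Γ) = ENNReal.ofReal (L + J).det :=
  stmt19_general n G L J hLdef hJ Γ hΓ
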